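/- Let (T,σ) be the least resolved tree of a 2-BMG (G,σ), with root ρ. Then the set of support leaves S_ρ of the root equals the support set S of (G,σ). In particular, S ≠ ∅ if and only if (G,σ) is connected. -/

import Mathlib

/-- A (finite) rooted tree on vertex type `V`, encoded by its ancestor relation:
`anc u v` means that `u` is an ancestor of `v`, i.e. `u` lies on the path from
the root to `v` (in particular the relation is reflexive, `v ⪯_T u ↔ anc u v`). -/
structure RTree (V : Type) where
  anc : V → V → Prop
  refl : ∀ v, anc v v
  antisymm : ∀ u v, anc u v → anc v u → u = v
  trans : ∀ u v w, anc u v → anc v w → anc u w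
  root : V
  root_anc : ∀ v, anc root v
  chain : ∀ u v w, anc u w → anc v w → anc u v ∨ anc v u

namespace RTree

variable {V C : Type}

/-- a leaf: a vertex without proper descendants. -/
def IsLeaf (T : RTree V) (v : V) : Prop := ∀ w, T.anc v w → w = v

/-- `v` is a child of `u`: `v ≺_T u` with no vertex strictly in between. -/
def IsChild (T : RTree V) (v u : V) : Prop :=
  T.anc u v ∧ u ≠ v ∧ ∀ w, T.anc u w → T.anc w v → w = u ∨ w = v

/-- phylogenetic: every inner vertex has at least two children. -/
def Phylo (T : RTree V) : Prop :=
  ∀ u, ¬ T.IsLeaf u → ∃ v w, v ≠ w ∧ T.IsChild v u ∧ T.IsChild w u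

/-- the leaf set `L(T)`. -/
def leaves (T : RTree V) : Set V := {x | T.IsLeaf x}

/-- `y` is a best match of `x` in the leaf-colored tree `(T,σ)`:
both are leaves, `σ x ≠ σ y`, and for every leaf `y'` of the color `σ y` we have
`lca(x,y) ⪯_T lca(x,y')`, i.e. every common ancestor of `x` and `y'` is an
ancestor of `y`.  These are exactly the arcs of the best match graph `G(T,σ)`,
whose vertex set is the leaf set of `T`. -/
def BestMatch (T : RTree V) (σ : V → C) (x y : V) : Prop :=
  T.IsLeaf x ∧ T.IsLeaf y ∧ σ x ≠ σ y ∧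
    ∀ y', T.IsLeaf y' → σ y' = σ y →
      ∀ u, T.anc u x → T.anc u y' → T.anc u y

/-- the subtree `T(v)` of `T` rooted at `v`. -/
def subtree (T : RTree V) (v : V) : RTree {w : V // T.anc v w} where
  anc a b := T.anc a.1 b.1
  refl a := T.refl a.1
  antisymm a b h1 h2 := Subtype.ext (T.antisymm _ _ h1 h2)
  trans a b c h1 h2 := T.trans _ _ _ h1 h2
  root := ⟨v, T.refl v⟩
  root_anc a := a.2
  chain a b c h1 h2 := T.chain _ _ _ h1 h2

/-- contraction of the tree edge between the non-root vertex `v` and its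
parent: the vertex `v` is identified with its parent, i.e. deleted. -/
def contract (T : RTree V) (v : V) (hv : v ≠ T.root) : RTree {w : V // w ≠ v} where
  anc a b := T.anc a.1 b.1
  refl a := T.refl a.1
  antisymm a b h1 h2 := Subtype.ext (T.antisymm _ _ h1 h2)
  trans a b c h1 h2 := T.trans _ _ _ h1 h2
  root := ⟨T.root, Ne.symm hv⟩
  root_anc a := T.root_anc a.1
  chain a b c h1 h2 := T.chain _ _ _ h1 h2

/-- The edge of `T` between `v` and its parent is redundant with respect to
`G(T,σ)`: contracting it yields a tree that still explains `G(T,σ)`, i.e. the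
contracted tree has the same leaf set and induces the same best-match arcs.
(Edges of a rooted tree are identified with their lower endpoint `v`.) -/
def Redundant (T : RTree V) (σ : V → C) (v : V) : Prop :=
  ∃ hv : v ≠ T.root,
    ¬ T.IsLeaf v ∧
    (∀ w : {w : V // w ≠ v}, T.IsLeaf w.1 ↔ (T.contract v hv).IsLeaf w) ∧
    (∀ x y : {w : V // w ≠ v},
      (T.BestMatch σ x.1 y.1 ↔ (T.contract v hv).BestMatch (fun w => σ w.1) x y))

/-- `(T,σ)` is the least resolved tree (of the BMG `G(T,σ)`): a phylogenetic
tree none of whose edges is redundant. -/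
def LeastResolved (T : RTree V) (σ : V → C) : Prop :=
  T.Phylo ∧ ∀ v, ¬ T.Redundant σ v

/-- the support leaves `S_u = child_T(u) ∩ L(T)` of a vertex `u`. -/
def SupportLeaves (T : RTree V) (u : V) : Set V :=
  {v | T.IsChild v u ∧ T.IsLeaf v}

/-- the set of colors `σ(L(T(v)))` occurring on leaves of the subtree `T(v)`. -/
def subColors (T : RTree V) (σ : V → C) (v : V) : Set C :=
  σ '' {x | T.IsLeaf x ∧ T.anc v x}

/-- the set of colors `σ(L(T))` of the leaves of `T`. -/
def leafColors (T : RTree V) (σ : V → C) : Set C := σ '' T.leaves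

/-- the leaf coloring uses exactly two colors, i.e. `G(T,σ)` is a 2-BMG. -/
def TwoColored (T : RTree V) (σ : V → C) : Prop :=
  ∃ c₁ c₂ : C, c₁ ≠ c₂ ∧ T.leafColors σ = {c₁, c₂}

end RTree

/-- the digraph with arc relation `A`, restricted to the vertex set `S`, is
connected: between any two vertices of `S` there is a path inside `S` in the
underlying undirected graph. -/
def ConnectedOn {β : Type} (A : β → β → Prop) (S : Set β) : Prop :=
  S.Nonempty ∧ ∀ x ∈ S, ∀ y ∈ S,
    Relation.ReflTransGen (fun a b => a ∈ S ∧ b ∈ S ∧ (A a b ∨ A b a)) x y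

/-- `K` is a connected component of the digraph induced by the arc relation `A`
on the vertex set `S`: a maximal connected subset of `S`. -/
def IsComponent {β : Type} (A : β → β → Prop) (S : Set β) (K : Set β) : Prop :=
  K ⊆ S ∧ ConnectedOn A K ∧
    ∀ K', K ⊆ K' → K' ⊆ S → ConnectedOn A K' → K' = K

namespace RTree

/-- the best match graph `G(T,σ)` (on the leaf set of `T`) is connected. -/
def BMGConnected {V C : Type} (T : RTree V) (σ : V → C) : Prop :=
  ConnectedOn (T.BestMatch σ) T.leaves

/-- the umbrella vertices `U(G,σ)` of the BMG `G(T,σ)`: leaves having an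
out-arc to every differently colored leaf. -/
def Umbrella {V C : Type} (T : RTree V) (σ : V → C) : Set V :=
  {x | T.IsLeaf x ∧ ∀ y, T.IsLeaf y → σ y ≠ σ x → T.BestMatch σ x y}

/-- `S` is closed under in-neighbours in `G(T,σ)`: `x ∈ S → N⁻(x) ⊆ S`. -/
def InClosed {V C : Type} (T : RTree V) (σ : V → C) (S : Set V) : Prop :=
  ∀ x ∈ S, ∀ y, T.BestMatch σ y x → y ∈ S

/-- `S` is a support set of `G(T,σ)`: a maximal subset of the umbrella
vertices that is closed under in-neighbours. -/
def IsSupportSet {V C : Type} (T : RTree V) (σ : V → C) (S : Set V) : Prop :=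
  S ⊆ T.Umbrella σ ∧ T.InClosed σ S ∧
    ∀ S', S ⊆ S' → S' ⊆ T.Umbrella σ → T.InClosed σ S' → S' = S

end RTree

/-!
In the least resolved tree of a 2-BMG every inner vertex `v` other than the root has leaves of
both colours below it, since otherwise contracting the edge above `v` changes no best match.
Hence a best match of a leaf `x` lies below every non-root inner ancestor of `x`, which makes the
leaf children of the root an in-closed set of umbrella vertices. Conversely, let `x` lie in an
in-closed set of umbrella vertices and have a parent other than the root, and let `u` be the
lowest ancestor of `x` above a leaf of the other colour: `u` is not the root and lies above all
leaves of that colour. If one of them matches `x`, it is an umbrella vertex too, so it also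
matches the leaves outside `T(u)`, which have the colour of `x` but are farther from it than `x`;
if none does, the edge above `u` is redundant.

An umbrella vertex is joined to every leaf by a path of length at most two. If no child of the
root is a leaf, every arc of `G` stays inside the subtree of one child of the root, so `G` is
disconnected.
-/

lemma connectedOn_of_forall_reflTransGen {β : Type} {A : β → β → Prop} {S : Set β} {x : β}
    (hx : x ∈ S)
    (h : ∀ z ∈ S, Relation.ReflTransGen (fun a b => a ∈ S ∧ b ∈ S ∧ (A a b ∨ A b a)) z x) :
    ConnectedOn A S := by
  refine ⟨⟨x, hx⟩, fun z₁ h₁ z₂ h₂ => (h z₁ h₁).trans ?_⟩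
  exact Relation.ReflTransGen.mono (fun _ _ ⟨hb, ha, hab⟩ => ⟨ha, hb, hab.symm⟩) _ _
    (Relation.reflTransGen_swap.2 (h z₂ h₂))

namespace RTree

variable {V C : Type}

section Finite

variable [Finite V] (T : RTree V)

lemma exists_minimal_anc {A : Set V} (hA : A.Nonempty) :
    ∃ m ∈ A, ∀ w ∈ A, T.anc m w → w = m := by
  obtain ⟨m, hmA, hmin⟩ := A.toFinite.exists_minimalFor (fun w => {z | T.anc w z}) A hA
  exact ⟨m, hmA, fun w hwA hmw =>
    T.antisymm _ _ (hmin hwA (fun z hwz => T.trans _ _ _ hmw hwz) (T.refl m)) hmw⟩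

lemma exists_maximal_anc {A : Set V} (hA : A.Nonempty) :
    ∃ m ∈ A, ∀ w ∈ A, T.anc w m → w = m := by
  obtain ⟨m, hmA, hmax⟩ := A.toFinite.exists_maximalFor (fun w => {z | T.anc w z}) A hA
  exact ⟨m, hmA, fun w hwA hwm =>
    T.antisymm _ _ hwm (hmax hwA (fun z hmz => T.trans _ _ _ hwm hmz) (T.refl w))⟩

lemma exists_isLeaf_anc (v : V) : ∃ ℓ, T.IsLeaf ℓ ∧ T.anc v ℓ := by
  obtain ⟨ℓ, hvℓ, hmin⟩ := T.exists_minimal_anc (A := {w | T.anc v w}) ⟨v, T.refl v⟩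
  exact ⟨ℓ, fun w hℓw => hmin w (T.trans _ _ _ hvℓ hℓw) hℓw, hvℓ⟩

lemma exists_lowest_anc (x : V) (P : V → Prop) (hroot : P T.root) :
    ∃ u, T.anc u x ∧ P u ∧ ∀ w, T.anc w x → P w → T.anc w u := by
  obtain ⟨u, ⟨hux, hPu⟩, hmin⟩ :=
    T.exists_minimal_anc (A := {w | T.anc w x ∧ P w}) ⟨T.root, T.root_anc x, hroot⟩
  refine ⟨u, hux, hPu, fun w hwx hPw => ?_⟩
  rcases T.chain w u x hwx hux with hwu | huw
  · exact hwu
  · rw [hmin w ⟨hwx, hPw⟩ huw]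
    exact T.refl u

lemma exists_isChild_of_ne_root {v : V} (hv : v ≠ T.root) : ∃ p, T.IsChild v p := by
  obtain ⟨p, hpv, hpne, hlowest⟩ := T.exists_lowest_anc v (· ≠ v) hv.symm
  refine ⟨p, hpv, hpne, fun w hpw hwv => ?_⟩
  by_cases hw : w = v
  · exact Or.inr hw
  · exact Or.inl (T.antisymm _ _ (hlowest w hwv hw) hpw)

lemma exists_isChild_root_anc {v : V} (hv : v ≠ T.root) :
    ∃ a, T.IsChild a T.root ∧ T.anc a v := by
  obtain ⟨a, ⟨hav, har⟩, hmax⟩ :=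
    T.exists_maximal_anc (A := {w | T.anc w v ∧ w ≠ T.root}) ⟨v, T.refl v, hv⟩
  refine ⟨a, ⟨T.root_anc a, har.symm, fun w _ hwa => ?_⟩, hav⟩
  by_cases hw : w = T.root
  · exact Or.inl hw
  · exact Or.inr (hmax w ⟨T.trans _ _ _ hwa hav, hw⟩ hwa)

end Finite

variable {T : RTree V} {σ : V → C}

lemma IsChild.not_isLeaf {v p : V} (hp : T.IsChild v p) : ¬ T.IsLeaf p :=
  fun h => hp.2.1 (h v hp.1).symm

lemma IsChild.eq_of_anc {a b u z : V} (ha : T.IsChild a u) (hb : T.IsChild b u)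
    (haz : T.anc a z) (hbz : T.anc b z) : a = b := by
  rcases T.chain a b z haz hbz with hab | hba
  · exact (hb.2.2 a ha.1 hab).resolve_left ha.2.1.symm
  · exact ((ha.2.2 b hb.1 hba).resolve_left hb.2.1.symm).symm

lemma TwoColored.exists_ne (h2 : T.TwoColored σ) (x : V) :
    ∃ y, T.IsLeaf y ∧ σ y ≠ σ x := by
  obtain ⟨c₁, c₂, hne, hcol⟩ := h2
  obtain ⟨y₁, hy₁, rfl⟩ : c₁ ∈ T.leafColors σ := hcol ▸ Set.mem_insert _ _
  obtain ⟨y₂, hy₂, rfl⟩ : c₂ ∈ T.leafColors σ := hcol ▸ Set.mem_insert_of_mem _ rfl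
  by_cases h : σ y₁ = σ x
  · exact ⟨y₂, hy₂, fun h' => hne (h.trans h'.symm)⟩
  · exact ⟨y₁, hy₁, h⟩

lemma TwoColored.eq_of_ne_of_ne (h2 : T.TwoColored σ) {x y z : V} (hx : T.IsLeaf x)
    (hy : T.IsLeaf y) (hz : T.IsLeaf z) (hyx : σ y ≠ σ x) (hzx : σ z ≠ σ x) : σ y = σ z := by
  obtain ⟨c₁, c₂, -, hcol⟩ := h2
  have hmem : ∀ {w}, T.IsLeaf w → σ w = c₁ ∨ σ w = c₂ := fun hw => by
    have hw' : σ _ ∈ T.leafColors σ := ⟨_, hw, rfl⟩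
    rwa [hcol] at hw'
  rcases hmem hx with h | h <;> rcases hmem hy with h' | h' <;> rcases hmem hz with h'' | h'' <;>
    simp_all

lemma TwoColored.root_not_isLeaf (h2 : T.TwoColored σ) : ¬ T.IsLeaf T.root := fun hr => by
  obtain ⟨y, hy, hne⟩ := h2.exists_ne T.root
  exact hne (congrArg σ (hr y (T.root_anc y)))

lemma TwoColored.ne_root_of_isLeaf (h2 : T.TwoColored σ) {x : V} (hx : T.IsLeaf x) :
    x ≠ T.root :=
  fun h => h2.root_not_isLeaf (h ▸ hx)

lemma mem_subColors_root {y : V} (hy : T.IsLeaf y) : σ y ∈ T.subColors σ T.root :=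
  ⟨y, ⟨hy, T.root_anc y⟩, rfl⟩

lemma bestMatch_iff_anc {x y u : V} (hx : T.IsLeaf x) (hy : T.IsLeaf y) (hxy : σ x ≠ σ y)
    (hux : T.anc u x) (hu : σ y ∈ T.subColors σ u)
    (hlowest : ∀ w, T.anc w x → σ y ∈ T.subColors σ w → T.anc w u) :
    T.BestMatch σ x y ↔ T.anc u y := by
  obtain ⟨y', ⟨hy', huy'⟩, hcy'⟩ := hu
  refine ⟨fun hbm => hbm.2.2.2 y' hy' hcy' u hux huy', fun huy => ⟨hx, hy, hxy, ?_⟩⟩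
  exact fun z hz hcz w hwx hwz => T.trans _ _ _ (hlowest w hwx ⟨z, ⟨hz, hwz⟩, hcz⟩) huy

lemma exists_bestMatch [Finite V] {x y₀ : V} (hx : T.IsLeaf x) (hy₀ : T.IsLeaf y₀)
    (hne : σ x ≠ σ y₀) : ∃ y, T.BestMatch σ x y ∧ σ y = σ y₀ := by
  obtain ⟨u, hux, ⟨y, ⟨hy, huy⟩, hcy⟩, hlowest⟩ :=
    T.exists_lowest_anc x (σ y₀ ∈ T.subColors σ ·) (mem_subColors_root hy₀)
  rw [← hcy] at hne hlowest
  exact ⟨y, (bestMatch_iff_anc hx hy hne hux ⟨y, ⟨hy, huy⟩, rfl⟩ hlowest).2 huy, hcy⟩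

lemma isLeaf_iff_isLeaf_contract [Finite V] {v : V} (hv : v ≠ T.root) (hnl : ¬ T.IsLeaf v)
    (w : {w : V // w ≠ v}) : T.IsLeaf w.1 ↔ (T.contract v hv).IsLeaf w := by
  refine ⟨fun h w' hw' => Subtype.ext (h w'.1 hw'), fun h w' hw' => ?_⟩
  by_cases hw'v : w' = v
  · subst hw'v
    obtain ⟨ℓ, hℓ, hvℓ⟩ := T.exists_isLeaf_anc w'
    have hℓw : ℓ = w.1 :=
      congrArg Subtype.val (h ⟨ℓ, fun he => hnl (he ▸ hℓ)⟩ (T.trans _ _ _ hw' hvℓ))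
    exact (w.2 (T.antisymm _ _ hw' (hℓw ▸ hvℓ))).elim
  · exact congrArg Subtype.val (h ⟨w', hw'v⟩ hw')

lemma bestMatch_contract_iff [Finite V] {v : V} (hv : v ≠ T.root) (hnl : ¬ T.IsLeaf v)
    (x y : {w : V // w ≠ v}) :
    (T.contract v hv).BestMatch (fun w => σ w.1) x y ↔
      T.IsLeaf x.1 ∧ T.IsLeaf y.1 ∧ σ x.1 ≠ σ y.1 ∧
        ∀ y', T.IsLeaf y' → σ y' = σ y.1 → ∀ w ≠ v, T.anc w x.1 → T.anc w y' → T.anc w y.1 := by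
  simp only [BestMatch, ← isLeaf_iff_isLeaf_contract hv hnl]
  refine and_congr_right' (and_congr_right' (and_congr_right' ⟨?_, ?_⟩))
  · intro h y' hy' hcy' w hwv hwx hwy'
    exact h ⟨y', fun he => hnl (he ▸ hy')⟩ hy' hcy' ⟨w, hwv⟩ hwx hwy'
  · intro h y' hy' hcy' w hwx hwy'
    exact h y'.1 hy' hcy' w.1 w.2 hwx hwy'

lemma redundant_of_forall_anc [Finite V] {v : V} (hv : v ≠ T.root) (hnl : ¬ T.IsLeaf v)
    (h : ∀ x y, T.IsLeaf x → T.IsLeaf y → σ x ≠ σ y →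
      (∀ y', T.IsLeaf y' → σ y' = σ y → ∀ w ≠ v, T.anc w x → T.anc w y' → T.anc w y) →
      T.anc v x → σ y ∈ T.subColors σ v → T.anc v y) :
    T.Redundant σ v := by
  refine ⟨hv, hnl, isLeaf_iff_isLeaf_contract hv hnl, fun x y => ?_⟩
  rw [bestMatch_contract_iff hv hnl]
  refine ⟨fun ⟨hx, hy, hxy, hbm⟩ => ⟨hx, hy, hxy, fun y' hy' hcy' w _ => hbm y' hy' hcy' w⟩,
    fun ⟨hx, hy, hxy, hoff⟩ => ⟨hx, hy, hxy, fun y' hy' hcy' w hwx hwy' => ?_⟩⟩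
  by_cases hwv : w = v
  · subst hwv
    exact h x y hx hy hxy hoff hwx ⟨y', ⟨hy', hwy'⟩, hcy'⟩
  · exact hoff y' hy' hcy' w hwv hwx hwy'

lemma redundant_of_subColors_subsingleton [Finite V] {v : V} (hv : v ≠ T.root)
    (hnl : ¬ T.IsLeaf v) (h : (T.subColors σ v).Subsingleton) : T.Redundant σ v :=
  redundant_of_forall_anc hv hnl fun x _ hx _ hxy _ hvx hy => (hxy (h ⟨x, ⟨hx, hvx⟩, rfl⟩ hy)).elim

lemma mem_subColors_of_forall_not_redundant [Finite V] (hNR : ∀ v, ¬ T.Redundant σ v)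
    (h2 : T.TwoColored σ) {v y : V} (hv : v ≠ T.root) (hnl : ¬ T.IsLeaf v) (hy : T.IsLeaf y) :
    σ y ∈ T.subColors σ v := by
  by_contra hyv
  refine hNR v (redundant_of_subColors_subsingleton hv hnl ?_)
  rintro _ ⟨a, ⟨ha, hva⟩, rfl⟩ _ ⟨b, ⟨hb, hvb⟩, rfl⟩
  exact h2.eq_of_ne_of_ne hy ha hb (fun h => hyv ⟨a, ⟨ha, hva⟩, h⟩)
    (fun h => hyv ⟨b, ⟨hb, hvb⟩, h⟩)

lemma anc_of_bestMatch [Finite V] (hNR : ∀ v, ¬ T.Redundant σ v) (h2 : T.TwoColored σ)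
    {x y v : V} (hxy : T.BestMatch σ x y) (hv : v ≠ T.root) (hnl : ¬ T.IsLeaf v)
    (hvx : T.anc v x) : T.anc v y := by
  obtain ⟨y', ⟨hy', hvy'⟩, hcy'⟩ := mem_subColors_of_forall_not_redundant hNR h2 hv hnl hxy.2.1
  exact hxy.2.2.2 y' hy' hcy' v hvx hvy'

lemma supportLeaves_root_subset_umbrella : T.SupportLeaves T.root ⊆ T.Umbrella σ := by
  rintro x ⟨hx, hxl⟩
  refine ⟨hxl, fun y hy hyx => ⟨hxl, hy, hyx.symm, fun y' _ hcy' u hux huy' => ?_⟩⟩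
  rcases hx.2.2 u (T.root_anc u) hux with rfl | rfl
  · exact T.root_anc y
  · exact (hyx (hcy' ▸ congrArg σ (hxl y' huy'))).elim

lemma inClosed_supportLeaves_root [Finite V] (hNR : ∀ v, ¬ T.Redundant σ v)
    (h2 : T.TwoColored σ) : T.InClosed σ (T.SupportLeaves T.root) := by
  rintro x ⟨hx, hxl⟩ y hyx
  obtain ⟨p, hp⟩ := T.exists_isChild_of_ne_root (h2.ne_root_of_isLeaf hyx.1)
  refine ⟨?_, hyx.1⟩
  by_cases hpr : p = T.root
  · exact hpr ▸ hp
  rcases hx.2.2 p (T.root_anc p) (anc_of_bestMatch hNR h2 hyx hpr hp.not_isLeaf hp.1) with h | rfl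
  · exact absurd h hpr
  · exact absurd (congrArg σ (hxl y hp.1)) hyx.2.2.1

lemma exists_isLeaf_not_anc [Finite V] (hP : T.Phylo) {u : V} (hu : u ≠ T.root) :
    ∃ ℓ, T.IsLeaf ℓ ∧ ¬ T.anc u ℓ := by
  obtain ⟨v, w, hvw, hv, hw⟩ := hP T.root fun h => hu (h u (T.root_anc u))
  by_contra! hall
  have hbelow : ∀ d, T.IsChild d T.root → T.anc d u := by
    intro d hd
    obtain ⟨ℓ, hℓ, hdℓ⟩ := T.exists_isLeaf_anc d
    rcases T.chain d u ℓ hdℓ (hall ℓ hℓ) with h | h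
    · exact h
    · rcases hd.2.2 u (T.root_anc u) h with rfl | rfl
      · exact absurd rfl hu
      · exact T.refl u
  exact hvw (hv.eq_of_anc hw (hbelow v hv) (hbelow w hw))

lemma redundant_of_forall_not_bestMatch [Finite V] {x u : V} (hx : T.IsLeaf x)
    (hux : T.anc u x) (hu : u ≠ T.root) (hnl : ¬ T.IsLeaf u)
    (hbelow : ∀ y, T.IsLeaf y → σ y ≠ σ x → T.anc u y)
    (hmatch : ∀ y, σ y ≠ σ x → ¬ T.BestMatch σ y x) : T.Redundant σ u := by
  refine redundant_of_forall_anc hu hnl fun a b ha hb hab hoff hua _ => ?_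
  by_cases hbx : σ b = σ x
  · rw [hbx] at hab hoff
    -- `a` does not match `x`, so its lowest ancestor above a leaf of colour `σ x` is not `u`
    obtain ⟨va, hva, hvax, hlowest⟩ :=
      T.exists_lowest_anc a (σ x ∈ T.subColors σ ·) (mem_subColors_root hx)
    have hvau : va ≠ u := by
      rintro rfl
      exact hmatch a hab ((bestMatch_iff_anc ha hx hab hva hvax hlowest).2 hux)
    obtain ⟨z, ⟨hz, hvz⟩, hzc⟩ := hvax
    exact T.trans _ _ _ (hlowest u hua ⟨x, ⟨hx, hux⟩, rfl⟩) (hoff z hz hzc va hvau hva hvz)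
  · exact hbelow b hb hbx

lemma subset_supportLeaves_root [Finite V] (hLRT : T.LeastResolved σ) (h2 : T.TwoColored σ)
    {S : Set V} (hU : S ⊆ T.Umbrella σ) (hS : T.InClosed σ S) :
    S ⊆ T.SupportLeaves T.root := by
  intro x hxS
  obtain ⟨hxl, hxU⟩ := hU hxS
  obtain ⟨p, hp⟩ := T.exists_isChild_of_ne_root (h2.ne_root_of_isLeaf hxl)
  refine ⟨?_, hxl⟩
  by_contra hpr
  replace hpr : p ≠ T.root := fun h => hpr (h ▸ hp)
  obtain ⟨y₀, hy₀, hy₀x⟩ := h2.exists_ne x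
  obtain ⟨u, hux, ⟨z, ⟨hz, huz⟩, hzc⟩, hlowest⟩ :=
    T.exists_lowest_anc x (σ y₀ ∈ T.subColors σ ·) (mem_subColors_root hy₀)
  have hbelow : ∀ y, T.IsLeaf y → σ y ≠ σ x → T.anc u y := fun y hy hyx =>
    (hxU y hy hyx).2.2.2 z hz (hzc.trans (h2.eq_of_ne_of_ne hxl hy₀ hy hy₀x hyx)) u hux huz
  have hpu : T.anc p u :=
    hlowest p hp.1 (mem_subColors_of_forall_not_redundant hLRT.2 h2 hpr hp.not_isLeaf hy₀)
  have hu : u ≠ T.root := fun h => hpr (T.antisymm _ _ (h ▸ hpu) (T.root_anc p))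
  by_cases hmatch : ∀ y, σ y ≠ σ x → ¬ T.BestMatch σ y x
  · have hnl : ¬ T.IsLeaf u := fun h => hy₀x (congrArg σ ((h y₀ (hbelow y₀ hy₀ hy₀x)).trans
      (h x hux).symm))
    exact hLRT.2 u (redundant_of_forall_not_bestMatch hxl hux hu hnl hbelow hmatch)
  · push Not at hmatch
    obtain ⟨y, hyx, hyxm⟩ := hmatch
    obtain ⟨ℓ, hℓ, hℓu⟩ := exists_isLeaf_not_anc hLRT.1 hu
    have hℓx : σ ℓ = σ x := by_contra fun h => hℓu (hbelow ℓ hℓ h)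
    have hyℓ := (hU (hS x hxS y hyxm)).2 ℓ hℓ (hℓx ▸ hyx.symm)
    exact hℓu (hyℓ.2.2.2 x hxl hℓx.symm u (hbelow y hyxm.1 hyx) hux)

lemma bmgConnected_of_mem_umbrella [Finite V] (h2 : T.TwoColored σ) {x : V}
    (hx : x ∈ T.Umbrella σ) : T.BMGConnected σ := by
  refine connectedOn_of_forall_reflTransGen hx.1 fun z hz => ?_
  by_cases hzx : σ z = σ x
  · obtain ⟨y₀, hy₀, hne⟩ := h2.exists_ne z
    obtain ⟨y, hzy, -⟩ := exists_bestMatch hz hy₀ hne.symm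
    exact .tail (.single ⟨hz, hzy.2.1, .inl hzy⟩)
      ⟨hzy.2.1, hx.1, .inr (hx.2 y hzy.2.1 (hzx ▸ hzy.2.2.1.symm))⟩
  · exact .single ⟨hz, hx.1, .inr (hx.2 z hz hzx)⟩

lemma anc_iff_of_bestMatch [Finite V] (hNR : ∀ v, ¬ T.Redundant σ v) (h2 : T.TwoColored σ)
    (hS : T.SupportLeaves T.root = ∅) {d x y : V} (hd : T.IsChild d T.root)
    (hxy : T.BestMatch σ x y) : T.anc d x ↔ T.anc d y := by
  have hdown : ∀ {e p q}, T.IsChild e T.root → T.BestMatch σ p q → T.anc e p → T.anc e q :=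
    fun he hpq hep => anc_of_bestMatch hNR h2 hpq he.2.1.symm
      (fun hel => Set.eq_empty_iff_forall_notMem.1 hS _ ⟨he, hel⟩) hep
  refine ⟨hdown hd hxy, fun hdy => ?_⟩
  obtain ⟨e, he, hex⟩ := T.exists_isChild_root_anc (h2.ne_root_of_isLeaf hxy.1)
  rwa [hd.eq_of_anc he hdy (hdown he hxy hex)]

lemma supportLeaves_root_nonempty [Finite V] (hLRT : T.LeastResolved σ) (h2 : T.TwoColored σ)
    (hconn : T.BMGConnected σ) : (T.SupportLeaves T.root).Nonempty := by
  rw [Set.nonempty_iff_ne_empty]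
  intro hS
  obtain ⟨v, w, hvw, hv, hw⟩ := hLRT.1 T.root h2.root_not_isLeaf
  obtain ⟨ℓv, hℓv, hvℓ⟩ := T.exists_isLeaf_anc v
  obtain ⟨ℓw, hℓw, hwℓ⟩ := T.exists_isLeaf_anc w
  refine hvw (hv.eq_of_anc hw ?_ hwℓ)
  have hpath := hconn.2 ℓv hℓv ℓw hℓw
  clear hℓw hwℓ
  induction hpath with
  | refl => exact hvℓ
  | tail _ hstep ih =>
    obtain ⟨-, -, hxy | hyx⟩ := hstep
    · exact (anc_iff_of_bestMatch hLRT.2 h2 hS hv hxy).1 ih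
    · exact (anc_iff_of_bestMatch hLRT.2 h2 hS hv hyx).2 ih

end RTree

/-- Let `(T,σ)` be the least resolved tree of a 2-BMG
`(G,σ)` with root `ρ`.  Then the support leaves `S_ρ` of the root are exactly
the support set `S` of `(G,σ)`; in particular `S ≠ ∅` iff `(G,σ)` is
connected. -/
theorem support_leaves_are_support_set {V C : Type} [Fintype V]
    (T : RTree V) (σ : V → C) (hLRT : T.LeastResolved σ)
    (h2 : T.TwoColored σ) :
    T.IsSupportSet σ (T.SupportLeaves T.root) ∧
      ((T.SupportLeaves T.root).Nonempty ↔ T.BMGConnected σ) := by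
  have hU : T.SupportLeaves T.root ⊆ T.Umbrella σ := RTree.supportLeaves_root_subset_umbrella
  refine ⟨⟨hU, RTree.inClosed_supportLeaves_root hLRT.2 h2, fun S hsub hSU hS => ?_⟩,
    fun ⟨x, hx⟩ => RTree.bmgConnected_of_mem_umbrella h2 (hU hx),
    RTree.supportLeaves_root_nonempty hLRT h2⟩
  exact (RTree.subset_supportLeaves_root hLRT h2 hSU hS).antisymm hsub
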